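/- arXiv:1311.0412 — 3 statements merged into one kernel-verified Lean document; each statement's English description precedes it below -/
import Mathlib

section
/- Let H1 and H2 be separable Hilbert spaces and let T : H1 -> H2 be a compact injective linear operator with singular value system {mu_k; phi_{1k}, phi_{0k}}_{k=1}^infinity: (phi_{1k}) is an orthonormal basis of H1, (phi_{0k}) is an orthonormal basis of H2, mu_1 >= mu_2 >= ... > 0 with mu_k -> 0, and T phi_{1k} = mu_k phi_{0k} for all k. Let Psi_J be a J-dimensional subspace of H1, let B_K be a K-dimensional subspace of H2 with J <= K, let Pi_K be the orthogonal projection of H2 onto B_K, and define sigma_{JK} = inf{ ||Pi_K T h|| : h in Psi_J, ||h|| = 1 } and tau_{2,2,J} = sup{ ||h|| / ||T h|| : h in Psi_J, T h != 0 }. Then: (1) sigma_{JK}^{-1} >= tau_{2,2,J} >= 1/mu_J; (2) if Psi_J equals the linear span of {phi_{11}, ..., phi_{1J}}, then tau_{2,2,J} <= 1/mu_J; (3) if in addition B_K contains the linear span of {phi_{01}, ..., phi_{0J}}, then sigma_{JK}^{-1} <= 1/mu_J, and hence sigma_{JK}^{-1} = tau_{2,2,J} = 1/mu_J. -/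
/-! In the singular bases `T` is diagonal: `‖T h‖² = ∑ μ_k² ⟪h, φ1_k⟫²` and
`‖h‖² = ∑ ⟪h, φ1_k⟫²`. A `J`-dimensional `Ψ` contains a nonzero `h` orthogonal to
`φ1_0, …, φ1_{J-2}`, and for it `‖T h‖ ≤ μ_{J-1} ‖h‖`, whence `τ ≥ 1/μ_{J-1}`. Conversely, on the
span of `φ1_0, …, φ1_{J-1}` we have `‖T h‖ ≥ μ_{J-1} ‖h‖`, and `T` maps that span into the span of
`φ0_0, …, φ0_{J-1}`, on which the projection onto `B` is the identity. Finally `σ τ ≤ 1` because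
testing `σ` on `h / ‖h‖` gives `σ ≤ ‖T h‖ / ‖h‖`, projections being contractions. -/

noncomputable section

open Filter Submodule
open scoped InnerProductSpace

variable {E F : Type*} [NormedAddCommGroup E] [InnerProductSpace ℝ E]
  [NormedAddCommGroup F] [InnerProductSpace ℝ F]

theorem Orthonormal.hasSum_sq_inner [CompleteSpace E] {ι : Type*} {v : ι → E}
    (hv : Orthonormal ℝ v) (hsp : (span ℝ (Set.range v)).topologicalClosure = ⊤) (x : E) :
    HasSum (fun i => ⟪x, v i⟫_ℝ ^ 2) (‖x‖ ^ 2) := by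
  simpa only [HilbertBasis.coe_mk, real_inner_self_eq_norm_sq, real_inner_comm (v _) x, ← sq]
    using (HilbertBasis.mk hv hsp.ge).hasSum_inner_mul_inner x x

theorem Orthonormal.inner_eq_zero_of_mem_span_image {ι : Type*} {v : ι → E}
    (hv : Orthonormal ℝ v) {s : Set ι} {i : ι} (hi : i ∉ s) {x : E}
    (hx : x ∈ span ℝ (v '' s)) : ⟪x, v i⟫_ℝ = 0 := by
  obtain ⟨l, hl, rfl⟩ := (Finsupp.mem_span_image_iff_linearCombination ℝ).mp hx
  exact hv.inner_finsupp_eq_zero hi hl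

theorem Submodule.exists_mem_ne_zero_forall_inner_eq_zero {n : ℕ} (v : Fin n → E)
    (Ψ : Submodule ℝ E) [FiniteDimensional ℝ Ψ] (hn : n < Module.finrank ℝ Ψ) :
    ∃ x ∈ Ψ, x ≠ 0 ∧ ∀ i, ⟪x, v i⟫_ℝ = 0 := by
  let f : Ψ →ₗ[ℝ] Fin n → ℝ :=
    LinearMap.pi fun i => ((innerSL ℝ (v i)).comp Ψ.subtypeL).toLinearMap
  obtain ⟨x, hx, hx0⟩ :=
    (Submodule.ne_bot_iff _).mp (LinearMap.ker_ne_bot_of_finrank_lt (f := f) (by simpa using hn))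
  refine ⟨x, x.2, by simpa using hx0, fun i => ?_⟩
  rw [real_inner_comm]
  exact congrFun (LinearMap.mem_ker.mp hx) i

-- `σ_JK` and `τ_{2,2,J}` of the paper, for `Ψ = Ψ_J` and `B = B_K`.
def sieveSigma (T : E →L[ℝ] F) (Ψ : Submodule ℝ E) (B : Submodule ℝ F)
    [B.HasOrthogonalProjection] : ℝ :=
  sInf {r | ∃ h ∈ Ψ, ‖h‖ = 1 ∧ r = ‖(orthogonalProjectionOnto B (T h) : F)‖}

def sieveTau (T : E →L[ℝ] F) (Ψ : Submodule ℝ E) : ℝ :=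
  sSup {r | ∃ h ∈ Ψ, T h ≠ 0 ∧ r = ‖h‖ / ‖T h‖}

section Sieve

variable (T : E →L[ℝ] F) {Ψ : Submodule ℝ E} (B : Submodule ℝ F) [B.HasOrthogonalProjection]

theorem sieveSigma_nonneg : 0 ≤ sieveSigma T Ψ B :=
  Real.sInf_nonneg (by rintro _ ⟨_, _, _, rfl⟩; positivity)

theorem sieveSigma_le_norm_apply {h : E} (hh : h ∈ Ψ) (h1 : ‖h‖ = 1) :
    sieveSigma T Ψ B ≤ ‖T h‖ :=
  calc sieveSigma T Ψ B ≤ ‖(orthogonalProjectionOnto B (T h) : F)‖ :=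
        csInf_le ⟨0, by rintro _ ⟨_, _, _, rfl⟩; positivity⟩ ⟨h, hh, h1, rfl⟩
    _ ≤ ‖T h‖ := B.norm_orthogonalProjectionOnto_apply_le _

theorem le_sieveSigma (hΨ : Ψ ≠ ⊥) {c : ℝ}
    (hc : ∀ h ∈ Ψ, ‖h‖ = 1 → c ≤ ‖(orthogonalProjectionOnto B (T h) : F)‖) :
    c ≤ sieveSigma T Ψ B := by
  obtain ⟨x, hx, hx0⟩ := Submodule.exists_mem_ne_zero_of_ne_bot hΨ
  rw [sieveSigma]
  refine le_csInf ⟨_, ⟨_, Ψ.smul_mem ‖x‖⁻¹ hx, norm_smul_inv_norm hx0, rfl⟩⟩ ?_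
  rintro _ ⟨h, hh, h1, rfl⟩
  exact hc h hh h1

theorem sieveSigma_mul_sieveTau_le_one : sieveSigma T Ψ B * sieveTau T Ψ ≤ 1 := by
  rcases (sieveSigma_nonneg T B).eq_or_lt with hσ | hσ
  · rw [← hσ, zero_mul]
    exact zero_le_one
  rw [← le_div_iff₀' hσ]
  refine Real.sSup_le ?_ (by positivity)
  rintro _ ⟨h, hh, hTh, rfl⟩
  have hh0 : h ≠ 0 := by rintro rfl; simp at hTh
  have hunit := sieveSigma_le_norm_apply T B (Ψ.smul_mem ‖h‖⁻¹ hh) (norm_smul_inv_norm hh0)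
  rw [map_smul, norm_smul, norm_inv, norm_norm, inv_mul_eq_div,
    le_div_iff₀ (norm_pos_iff.mpr hh0)] at hunit
  rw [div_le_div_iff₀ (norm_pos_iff.mpr hTh) hσ]
  linarith

theorem le_sieveTau [FiniteDimensional ℝ Ψ] (hT : Set.InjOn T Ψ) {h : E} (hh : h ∈ Ψ)
    (hTh : T h ≠ 0) : ‖h‖ / ‖T h‖ ≤ sieveTau T Ψ := by
  let f : Ψ →ₗ[ℝ] F := (T : E →ₗ[ℝ] F).comp Ψ.subtype
  have hf : LinearMap.ker f = ⊥ :=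
    LinearMap.ker_eq_bot.mpr fun x y hxy => Subtype.ext (hT x.2 y.2 hxy)
  obtain ⟨K, -, hK⟩ := f.exists_antilipschitzWith hf
  refine le_csSup ⟨K, ?_⟩ ⟨h, hh, hTh, rfl⟩
  rintro _ ⟨x, hx, hTx, rfl⟩
  rw [div_le_iff₀ (norm_pos_iff.mpr hTx)]
  exact ZeroHomClass.bound_of_antilipschitz f hK ⟨x, hx⟩

theorem sieveTau_le_inv {c : ℝ} (hc : 0 < c) (hT : ∀ h ∈ Ψ, c * ‖h‖ ≤ ‖T h‖) :
    sieveTau T Ψ ≤ c⁻¹ := by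
  refine Real.sSup_le ?_ (by positivity)
  rintro _ ⟨h, hh, hTh, rfl⟩
  rw [div_le_iff₀ (norm_pos_iff.mpr hTh), ← div_eq_inv_mul, le_div_iff₀' hc]
  exact hT h hh

end Sieve

structure IsSingularSystem (T : E →L[ℝ] F) {ι : Type*} (μ : ι → ℝ) (φ1 : ι → E) (φ0 : ι → F) :
    Prop where
  orthonormal₁ : Orthonormal ℝ φ1
  dense₁ : (span ℝ (Set.range φ1)).topologicalClosure = ⊤
  orthonormal₀ : Orthonormal ℝ φ0
  dense₀ : (span ℝ (Set.range φ0)).topologicalClosure = ⊤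
  apply_eq : ∀ k, T (φ1 k) = μ k • φ0 k

namespace IsSingularSystem

variable {T : E →L[ℝ] F} {ι : Type*} {μ : ι → ℝ} {φ1 : ι → E} {φ0 : ι → F}
  (hT : IsSingularSystem T μ φ1 φ0)
include hT

theorem inner_apply (h : E) (k : ι) : ⟪T h, φ0 k⟫_ℝ = μ k * ⟪h, φ1 k⟫_ℝ := by
  have hdense : Dense (span ℝ (Set.range φ1) : Set E) :=
    Submodule.dense_iff_topologicalClosure_eq_top.mpr hT.dense₁
  have : (innerSL ℝ (φ0 k)).comp T = μ k • innerSL ℝ (φ1 k) := by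
    refine ContinuousLinearMap.ext_on hdense ?_
    rintro _ ⟨j, rfl⟩
    by_cases hkj : k = j
    · subst hkj
      simp [hT.apply_eq, hT.orthonormal₀.1, hT.orthonormal₁.1]
    · simp [hT.apply_eq, hT.orthonormal₀.inner_eq_zero hkj,
        hT.orthonormal₁.inner_eq_zero hkj]
  simpa [real_inner_comm] using DFunLike.congr_fun this h

theorem hasSum_sq_norm_apply [CompleteSpace F] (h : E) :
    HasSum (fun k => (μ k * ⟪h, φ1 k⟫_ℝ) ^ 2) (‖T h‖ ^ 2) := by
  simpa only [hT.inner_apply] using hT.orthonormal₀.hasSum_sq_inner hT.dense₀ (T h)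

theorem apply_mem_span_image {s : Set ι} {h : E} (hh : h ∈ span ℝ (φ1 '' s)) :
    T h ∈ span ℝ (φ0 '' s) := by
  refine (span_le (p := (span ℝ (φ0 '' s)).comap (T : E →ₗ[ℝ] F))).mpr ?_ hh
  rintro _ ⟨k, hk, rfl⟩
  simpa [hT.apply_eq] using smul_mem _ (μ k) (subset_span (Set.mem_image_of_mem φ0 hk))

theorem norm_apply_le [CompleteSpace E] [CompleteSpace F] [LinearOrder ι] (hμ : Antitone μ)
    (hμ0 : ∀ k, 0 ≤ μ k) {n : ι} {h : E} (hh : ∀ k < n, ⟪h, φ1 k⟫_ℝ = 0) :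
    ‖T h‖ ≤ μ n * ‖h‖ := by
  have hsq : ‖T h‖ ^ 2 ≤ (μ n * ‖h‖) ^ 2 := by
    rw [mul_pow]
    refine hasSum_le (fun k => ?_) (hT.hasSum_sq_norm_apply h)
      ((hT.orthonormal₁.hasSum_sq_inner hT.dense₁ h).mul_left _)
    rcases lt_or_ge k n with hk | hk
    · simp [hh k hk]
    · rw [mul_pow]
      gcongr
      exacts [hμ0 k, hμ hk]
  exact le_of_pow_le_pow_left₀ two_ne_zero (mul_nonneg (hμ0 n) (norm_nonneg h)) hsq

section Preorder

variable [Preorder ι] (hμ : Antitone μ)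
include hμ

theorem mul_norm_le_norm_apply [CompleteSpace E] [CompleteSpace F] {n : ι} (hμn : 0 ≤ μ n)
    {s : Set ι} (hs : ∀ k ∈ s, k ≤ n) {h : E} (hh : h ∈ span ℝ (φ1 '' s)) :
    μ n * ‖h‖ ≤ ‖T h‖ := by
  have hsq : (μ n * ‖h‖) ^ 2 ≤ ‖T h‖ ^ 2 := by
    rw [mul_pow]
    refine hasSum_le (fun k => ?_) ((hT.orthonormal₁.hasSum_sq_inner hT.dense₁ h).mul_left _)
      (hT.hasSum_sq_norm_apply h)
    by_cases hk : k ∈ s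
    · rw [mul_pow]
      gcongr
      exact hμ (hs k hk)
    · simp [hT.orthonormal₁.inner_eq_zero_of_mem_span_image hk hh]
  exact le_of_pow_le_pow_left₀ two_ne_zero (norm_nonneg _) hsq

theorem sieveTau_span_le [CompleteSpace E] [CompleteSpace F] {n : ι} (hμn : 0 < μ n)
    {s : Set ι} (hs : ∀ k ∈ s, k ≤ n) : sieveTau T (span ℝ (φ1 '' s)) ≤ (μ n)⁻¹ :=
  sieveTau_le_inv T hμn fun _ hh => hT.mul_norm_le_norm_apply hμ hμn.le hs hh

theorem le_sieveSigma_span [CompleteSpace E] [CompleteSpace F] {n : ι} (hμn : 0 ≤ μ n)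
    {s : Set ι} (hs : ∀ k ∈ s, k ≤ n) (hsne : s.Nonempty) (B : Submodule ℝ F)
    [B.HasOrthogonalProjection] (hB : span ℝ (φ0 '' s) ≤ B) :
    μ n ≤ sieveSigma T (span ℝ (φ1 '' s)) B := by
  obtain ⟨k, hk⟩ := hsne
  have hne : span ℝ (φ1 '' s) ≠ ⊥ := (Submodule.ne_bot_iff _).mpr
    ⟨φ1 k, subset_span (Set.mem_image_of_mem φ1 hk), hT.orthonormal₁.ne_zero k⟩
  refine le_sieveSigma T B hne fun h hh h1 => ?_
  rw [show (orthogonalProjectionOnto B (T h) : F) = T h from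
    B.starProjection_eq_self_iff.mpr (hB (hT.apply_mem_span_image hh))]
  simpa [h1] using hT.mul_norm_le_norm_apply hμ hμn hs hh

end Preorder

end IsSingularSystem

theorem IsSingularSystem.inv_le_sieveTau [CompleteSpace E] [CompleteSpace F] {T : E →L[ℝ] F}
    {μ : ℕ → ℝ} {φ1 : ℕ → E} {φ0 : ℕ → F} (hT : IsSingularSystem T μ φ1 φ0)
    (hμ : Antitone μ) (hμpos : ∀ k, 0 < μ k) {Ψ : Submodule ℝ E} [FiniteDimensional ℝ Ψ]
    (hinj : Set.InjOn T Ψ) {n : ℕ} (hn : n < Module.finrank ℝ Ψ) :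
    (μ n)⁻¹ ≤ sieveTau T Ψ := by
  obtain ⟨x, hx, hx0, horth⟩ :=
    Ψ.exists_mem_ne_zero_forall_inner_eq_zero (fun i : Fin n => φ1 i) hn
  have hTx : T x ≠ 0 := fun h0 => hx0 (hinj hx Ψ.zero_mem (by rw [h0, map_zero]))
  have hle : ‖T x‖ ≤ μ n * ‖x‖ :=
    hT.norm_apply_le hμ (fun k => (hμpos k).le) fun k hk => horth ⟨k, hk⟩
  refine le_trans ?_ (le_sieveTau T hinj hx hTx)
  rwa [le_div_iff₀ (norm_pos_iff.mpr hTx), inv_mul_le_iff₀ (hμpos n)]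

-- Singular values are indexed from `0`: the paper's `μ_J` is `μ (J - 1)`.
theorem stmt1_general {H1 H2 : Type}
    [NormedAddCommGroup H1] [InnerProductSpace ℝ H1] [CompleteSpace H1]
    [NormedAddCommGroup H2] [InnerProductSpace ℝ H2] [CompleteSpace H2]
    (T : H1 →L[ℝ] H2)
    (hTinj : Function.Injective T)
    (μ : ℕ → ℝ) (φ1 : ℕ → H1) (φ0 : ℕ → H2)
    (hφ1on : Orthonormal ℝ φ1)
    (hφ1tot : (span ℝ (Set.range φ1)).topologicalClosure = ⊤)
    (hφ0on : Orthonormal ℝ φ0)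
    (hφ0tot : (span ℝ (Set.range φ0)).topologicalClosure = ⊤)
    (hμpos : ∀ k, 0 < μ k) (hμmono : Antitone μ)
    (hsvd : ∀ k, T (φ1 k) = μ k • φ0 k)
    (J : ℕ) (hJ : 0 < J)
    (Ψ : Submodule ℝ H1) [FiniteDimensional ℝ Ψ] (hΨ : Module.finrank ℝ Ψ = J)
    (B : Submodule ℝ H2) [FiniteDimensional ℝ B]
    (σ τ : ℝ)
    (hσ : σ = sInf {r | ∃ h ∈ Ψ, ‖h‖ = 1 ∧
      r = ‖(orthogonalProjection B (T h) : H2)‖})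
    (hτ : τ = sSup {r | ∃ h ∈ Ψ, T h ≠ 0 ∧ r = ‖h‖ / ‖T h‖}) :
    (σ * τ ≤ 1 ∧ 1 / μ (J - 1) ≤ τ)
    ∧ (Ψ = span ℝ (φ1 '' Set.Iio J) → τ ≤ 1 / μ (J - 1))
    ∧ (Ψ = span ℝ (φ1 '' Set.Iio J) → span ℝ (φ0 '' Set.Iio J) ≤ B →
        σ⁻¹ ≤ 1 / μ (J - 1) ∧ σ⁻¹ = τ ∧ τ = 1 / μ (J - 1)) := by
  have hS : IsSingularSystem T μ φ1 φ0 := ⟨hφ1on, hφ1tot, hφ0on, hφ0tot, hsvd⟩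
  obtain rfl : σ = sieveSigma T Ψ B := hσ
  obtain rfl : τ = sieveTau T Ψ := hτ
  have hIio : ∀ k ∈ Set.Iio J, k ≤ J - 1 := fun k hk => Nat.le_sub_one_of_lt hk
  have hτ_ge : (μ (J - 1))⁻¹ ≤ sieveTau T Ψ :=
    hS.inv_le_sieveTau hμmono hμpos hTinj.injOn (by omega)
  have hτ_le : Ψ = span ℝ (φ1 '' Set.Iio J) → sieveTau T Ψ ≤ (μ (J - 1))⁻¹ := by
    rintro rfl
    exact hS.sieveTau_span_le hμmono (hμpos _) hIio
  simp only [one_div]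
  refine ⟨⟨sieveSigma_mul_sieveTau_le_one T B, hτ_ge⟩, hτ_le, fun hΨ_eq hB_ge => ?_⟩
  have hτ_eq := le_antisymm (hτ_le hΨ_eq) hτ_ge
  have hσ_ge : μ (J - 1) ≤ sieveSigma T Ψ B := by
    subst hΨ_eq
    exact hS.le_sieveSigma_span hμmono (hμpos _).le hIio ⟨0, hJ⟩ B hB_ge
  have hσ_le : sieveSigma T Ψ B ≤ μ (J - 1) := by
    have := sieveSigma_mul_sieveTau_le_one T (Ψ := Ψ) B
    rwa [hτ_eq, ← div_eq_mul_inv, div_le_one (hμpos _)] at this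
  rw [le_antisymm hσ_le hσ_ge, hτ_eq]
  exact ⟨le_rfl, rfl, rfl⟩

/-- Lemma on measures of ill-posedness: relations between the
sieve measures of ill-posedness `σ_JK`, `τ_{2,2,J}` and the singular values
`μ_J` of a compact injective operator `T` with singular value system
`{μ_k; φ1_k, φ0_k}` (indexed here by `k : ℕ`, so the paper's `μ_J` is `μ (J-1)`).
Part (1), `σ_JK⁻¹ ≥ τ_{2,2,J} ≥ 1/μ_J`, is stated in the equivalent
inverse-free form `σ * τ ≤ 1 ∧ 1/μ_J ≤ τ`. -/
theorem stmt1 {H1 H2 : Type}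
    [NormedAddCommGroup H1] [InnerProductSpace ℝ H1] [CompleteSpace H1]
    [TopologicalSpace.SeparableSpace H1]
    [NormedAddCommGroup H2] [InnerProductSpace ℝ H2] [CompleteSpace H2]
    [TopologicalSpace.SeparableSpace H2]
    (T : H1 →L[ℝ] H2) (hTcomp : IsCompactOperator T)
    (hTinj : Function.Injective T)
    (μ : ℕ → ℝ) (φ1 : ℕ → H1) (φ0 : ℕ → H2)
    (hφ1on : Orthonormal ℝ φ1)
    (hφ1tot : (span ℝ (Set.range φ1)).topologicalClosure = ⊤)
    (hφ0on : Orthonormal ℝ φ0)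
    (hφ0tot : (span ℝ (Set.range φ0)).topologicalClosure = ⊤)
    (hμpos : ∀ k, 0 < μ k) (hμmono : Antitone μ)
    (hμ0 : Tendsto μ atTop (nhds 0))
    (hsvd : ∀ k, T (φ1 k) = μ k • φ0 k)
    (J K : ℕ) (hJ : 0 < J) (hJK : J ≤ K)
    (Ψ : Submodule ℝ H1) [FiniteDimensional ℝ Ψ] (hΨ : Module.finrank ℝ Ψ = J)
    (B : Submodule ℝ H2) [FiniteDimensional ℝ B] (hB : Module.finrank ℝ B = K)
    (σ τ : ℝ)
    (hσ : σ = sInf {r | ∃ h ∈ Ψ, ‖h‖ = 1 ∧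
      r = ‖(orthogonalProjection B (T h) : H2)‖})
    (hτ : τ = sSup {r | ∃ h ∈ Ψ, T h ≠ 0 ∧ r = ‖h‖ / ‖T h‖}) :
    (σ * τ ≤ 1 ∧ 1 / μ (J - 1) ≤ τ)
    ∧ (Ψ = span ℝ (φ1 '' Set.Iio J) → τ ≤ 1 / μ (J - 1))
    ∧ (Ψ = span ℝ (φ1 '' Set.Iio J) → span ℝ (φ0 '' Set.Iio J) ≤ B →
        σ⁻¹ ≤ 1 / μ (J - 1) ∧ σ⁻¹ = τ ∧ τ = 1 / μ (J - 1)) :=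
  stmt1_general T hTinj μ φ1 φ0 hφ1on hφ1tot hφ0on hφ0tot hμpos hμmono hsvd J hJ Ψ hΨ B σ τ hσ hτ
end
end

section
/- Let X be a random variable with values in a measurable space, let b_{K1}, ..., b_{KK} be measurable real-valued functions with b^K(x) = (b_{K1}(x), ..., b_{KK}(x))' and Gram matrix G_K = E[b^K(X) b^K(X)'] satisfying lambda_min(G_K) > 0, let b-tilde^K(x) = G_K^{-1/2} b^K(x), let x_1, ..., x_n be arbitrary points of the space, and let B-tilde be the n x K matrix with i-th row b-tilde^K(x_i)'. Then sup{ | (1/n) sum_{i=1}^n b(x_i)^2 - E[b(X)^2] | / E[b(X)^2] : b in span{b_{K1}, ..., b_{KK}}, E[b(X)^2] != 0 } = || B-tilde' B-tilde / n - I_K ||, the spectral norm of the symmetric matrix B-tilde' B-tilde / n - I_K. -/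
/-!
Write `d = R c`. Since `G = R R` with `R` symmetric, the population second moment of
`∑ c_k b_k` is `‖d‖²`, and since `b^K(x_i) = R b̃^K(x_i)` its empirical second moment is
`d' (B̃'B̃/n) d`. The normalized deviation is therefore the absolute Rayleigh quotient of the
symmetric matrix `B̃'B̃/n - I` at `d`, and `d` runs over all nonzero vectors because `R` is
invertible. For a symmetric matrix the supremum of the absolute Rayleigh quotient is the
operator norm.
-/

noncomputable section
open Matrix MeasureTheory

/-- Euclidean norm on ℝ^K. -/
def eucNorm {K : ℕ} (v : Fin K → ℝ) : ℝ := Real.sqrt (∑ k, v k ^ 2)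

/-- Spectral norm (largest singular value) of a real matrix. -/
def specNorm {m n : ℕ} (A : Matrix (Fin m) (Fin n) ℝ) : ℝ :=
  sSup {r | ∃ v : Fin n → ℝ, eucNorm v ≤ 1 ∧ r = eucNorm (A.mulVec v)}

open scoped Matrix.Norms.L2Operator

theorem eucNorm_eq_norm_toLp {n : ℕ} (v : Fin n → ℝ) : eucNorm v = ‖WithLp.toLp 2 v‖ := by
  simp only [eucNorm, EuclideanSpace.norm_eq, Real.norm_eq_abs, sq_abs]

theorem specNorm_eq_l2_opNorm {m n : ℕ} (A : Matrix (Fin m) (Fin n) ℝ) : specNorm A = ‖A‖ := by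
  rw [specNorm, l2_opNorm_def, ← ContinuousLinearMap.sSup_unitClosedBall_eq_norm]
  congr 1
  ext r
  simp only [Set.mem_ofPred_eq, Set.mem_image, Metric.mem_closedBall, dist_zero_right,
    eucNorm_eq_norm_toLp, (WithLp.equiv 2 (Fin n → ℝ)).symm.surjective.exists]
  simp [eq_comm]

theorem Matrix.rayleighQuotient_toEuclideanCLM_toLp {n : Type*} [Fintype n] [DecidableEq n]
    (A : Matrix n n ℝ) (d : n → ℝ) :
    (toEuclideanCLM (𝕜 := ℝ) A).rayleighQuotient (WithLp.toLp 2 d) = d ⬝ᵥ A *ᵥ d / (d ⬝ᵥ d) := by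
  rw [ContinuousLinearMap.rayleighQuotient, ContinuousLinearMap.reApplyInnerSelf_apply,
    real_inner_comm, inner_toEuclideanCLM, EuclideanSpace.real_norm_sq_eq]
  simp [dotProduct, sq]

theorem Matrix.IsHermitian.l2_opNorm_eq_sSup_abs_rayleigh {n : Type*} [Fintype n] [DecidableEq n]
    {A : Matrix n n ℝ} (hA : A.IsHermitian) :
    ‖A‖ = sSup {r | ∃ d : n → ℝ, d ≠ 0 ∧ r = |d ⬝ᵥ A *ᵥ d| / (d ⬝ᵥ d)} := by
  set S := {r | ∃ d : n → ℝ, d ≠ 0 ∧ r = |d ⬝ᵥ A *ᵥ d| / (d ⬝ᵥ d)}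
  set T := toEuclideanCLM (𝕜 := ℝ) A
  have hT : T.IsSymmetric := isSymmetric_toEuclideanLin_iff.mpr hA
  have hself (d : n → ℝ) : 0 ≤ d ⬝ᵥ d := by simpa using dotProduct_star_self_nonneg d
  have hquot (d : n → ℝ) :
      |d ⬝ᵥ A *ᵥ d| / (d ⬝ᵥ d) = |T.rayleighQuotient (WithLp.toLp 2 d)| := by
    rw [rayleighQuotient_toEuclideanCLM_toLp, abs_div, abs_of_nonneg (hself d)]
  have hbdd : BddAbove S := by
    refine ⟨‖T‖, ?_⟩
    rintro r ⟨d, -, rfl⟩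
    rw [hquot]
    exact T.rayleighQuotient_le_norm _
  have hnonneg : 0 ≤ sSup S :=
    Real.sSup_nonneg (by rintro r ⟨d, -, rfl⟩; exact div_nonneg (abs_nonneg _) (hself d))
  rw [← l2_opNorm_toEuclideanCLM, T.norm_eq_iSup_rayleighQuotient hT]
  refine le_antisymm (ciSup_le fun x => ?_) ?_
  · obtain ⟨d, rfl⟩ := (WithLp.equiv 2 (n → ℝ)).symm.surjective x
    rcases eq_or_ne d 0 with rfl | hd
    · simpa using hnonneg
    · exact le_csSup hbdd ⟨d, hd, (hquot d).symm⟩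
  · rcases S.eq_empty_or_nonempty with hS | hS
    · rw [hS, Real.sSup_empty]
      exact (abs_nonneg _).trans (le_ciSup T.bddAbove_rayleighQuotient 0)
    · refine csSup_le hS ?_
      rintro r ⟨d, -, rfl⟩
      rw [hquot]
      exact le_ciSup T.bddAbove_rayleighQuotient _

theorem Matrix.sum_sq_dotProduct_eq {ι κ : Type*} [Fintype ι] [Fintype κ] (u : κ → ι → ℝ)
    (d : ι → ℝ) : ∑ i, (d ⬝ᵥ u i) ^ 2 = d ⬝ᵥ ((of u)ᵀ * of u) *ᵥ d := by
  rw [← mulVec_mulVec, dotProduct_mulVec, ← mulVec_transpose, transpose_transpose]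
  simp only [dotProduct, mulVec, of_apply, sq]
  exact Finset.sum_congr rfl fun i _ => by simp only [mul_comm (d _)]

theorem integral_sq_dotProduct_eq {Ω ι : Type*} [Fintype ι] [MeasurableSpace Ω] {μ : Measure Ω}
    {f : Ω → ι → ℝ} (hf : ∀ j k, Integrable (fun ω => f ω j * f ω k) μ) (c : ι → ℝ) :
    ∫ ω, (c ⬝ᵥ f ω) ^ 2 ∂μ = c ⬝ᵥ (of fun j k => ∫ ω, f ω j * f ω k ∂μ) *ᵥ c := by
  have hexpand (ω : Ω) : (c ⬝ᵥ f ω) ^ 2 = ∑ j, ∑ k, c j * c k * (f ω j * f ω k) := by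
    simp only [dotProduct, sq, Finset.sum_mul_sum]
    exact Finset.sum_congr rfl fun j _ => Finset.sum_congr rfl fun k _ => by ring
  simp only [hexpand]
  simp only [dotProduct, mulVec, of_apply, Finset.mul_sum]
  rw [integral_finsetSum _ fun j _ => integrable_finsetSum _ fun k _ => (hf j k).const_mul _]
  refine Finset.sum_congr rfl fun j _ => ?_
  rw [integral_finsetSum _ fun k _ => (hf j k).const_mul _]
  refine Finset.sum_congr rfl fun k _ => ?_
  rw [integral_const_mul]
  ring

theorem stmt7_general {Ω E : Type} [MeasurableSpace Ω]
    (P : Measure Ω)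
    (X : Ω → E)
    (K : ℕ) (b : Fin K → E → ℝ)
    (hbint : ∀ j k, Integrable (fun ω => b j (X ω) * b k (X ω)) P)
    (G : Matrix (Fin K) (Fin K) ℝ)
    (hG : G = Matrix.of fun j k => ∫ ω, b j (X ω) * b k (X ω) ∂P)
    (R : Matrix (Fin K) (Fin K) ℝ) (hR : R.PosDef) (hRG : R * R = G)
    (n : ℕ) (x : Fin n → E) :
    sSup {r | ∃ c : Fin K → ℝ,
        (∫ ω, (∑ k, c k * b k (X ω)) ^ 2 ∂P) ≠ 0 ∧
        r = |(1 / n : ℝ) * ∑ i, (∑ k, c k * b k (x i)) ^ 2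
              - ∫ ω, (∑ k, c k * b k (X ω)) ^ 2 ∂P|
            / ∫ ω, (∑ k, c k * b k (X ω)) ^ 2 ∂P}
      = specNorm ((Matrix.of fun j k =>
          (1 / n : ℝ) * ∑ i, (R⁻¹.mulVec (fun l => b l (x i))) j
            * (R⁻¹.mulVec (fun l => b l (x i))) k) - 1) := by
  set u : Fin n → Fin K → ℝ := fun i => R⁻¹ *ᵥ fun l => b l (x i)
  set B : Matrix (Fin n) (Fin K) ℝ := of u
  change sSup _ = specNorm ((1 / n : ℝ) • (Bᵀ * B) - 1)
  set A : Matrix (Fin K) (Fin K) ℝ := (1 / n : ℝ) • (Bᵀ * B)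
  have hRsymm : Rᵀ = R := hR.isHermitian
  have hmoment (c : Fin K → ℝ) : ∫ ω, (∑ k, c k * b k (X ω)) ^ 2 ∂P = R *ᵥ c ⬝ᵥ R *ᵥ c := by
    refine (integral_sq_dotProduct_eq (f := fun ω k => b k (X ω)) hbint c).trans ?_
    rw [← hG, ← hRG, ← mulVec_mulVec, dotProduct_mulVec, ← mulVec_transpose, hRsymm]
  have hempirical (c : Fin K → ℝ) : (1 / n : ℝ) * ∑ i, (∑ k, c k * b k (x i)) ^ 2
      = R *ᵥ c ⬝ᵥ A *ᵥ R *ᵥ c := by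
    have hcoord (i : Fin n) : ∑ k, c k * b k (x i) = R *ᵥ c ⬝ᵥ u i := by
      rw [← vecMul_transpose, hRsymm, ← dotProduct_mulVec, mulVec_mulVec,
        mul_nonsing_inv R ((isUnit_iff_isUnit_det R).1 hR.isUnit), one_mulVec]
      rfl
    simp only [hcoord, sum_sq_dotProduct_eq, smul_mulVec, dotProduct_smul, smul_eq_mul, A, B]
  have hsymm : (A - 1).IsHermitian :=
    ((isHermitian_conjTranspose_mul_self B).smul (IsSelfAdjoint.all _)).sub isHermitian_one
  rw [specNorm_eq_l2_opNorm, hsymm.l2_opNorm_eq_sSup_abs_rayleigh]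
  congr 1
  ext r
  simp only [Set.mem_ofPred_eq, hmoment, hempirical]
  refine ((mulVec_surjective_iff_isUnit.2 hR.isUnit).exists
    (p := fun d => d ⬝ᵥ d ≠ 0 ∧ r = |d ⬝ᵥ A *ᵥ d - d ⬝ᵥ d| / (d ⬝ᵥ d))).symm.trans ?_
  simp only [ne_eq, dotProduct_self_eq_zero, sub_mulVec, one_mulVec, dotProduct_sub]

/-- empirical identifiability as a matrix criterion:
the supremum of the normalized deviation between the empirical and true second
moments over the span of the basis equals the spectral norm of
`B̃'B̃/n - I_K`.  Here `R` is the positive-definite symmetric square root of the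
Gram matrix `G`, so the orthonormalized basis is `b̃ = R⁻¹ b = G^{-1/2} b`. -/
theorem stmt7 {Ω E : Type} [MeasurableSpace Ω] [MeasurableSpace E]
    (P : Measure Ω) [IsProbabilityMeasure P]
    (X : Ω → E) (hX : Measurable X)
    (K : ℕ) (hK : 0 < K) (b : Fin K → E → ℝ) (hb : ∀ k, Measurable (b k))
    (hbint : ∀ j k, Integrable (fun ω => b j (X ω) * b k (X ω)) P)
    (G : Matrix (Fin K) (Fin K) ℝ)
    (hG : G = Matrix.of fun j k => ∫ ω, b j (X ω) * b k (X ω) ∂P)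
    (hGpos : ∀ v : Fin K → ℝ, v ≠ 0 → 0 < v ⬝ᵥ G.mulVec v)
    (R : Matrix (Fin K) (Fin K) ℝ) (hR : R.PosDef) (hRG : R * R = G)
    (n : ℕ) (hn : 0 < n) (x : Fin n → E) :
    sSup {r | ∃ c : Fin K → ℝ,
        (∫ ω, (∑ k, c k * b k (X ω)) ^ 2 ∂P) ≠ 0 ∧
        r = |(1 / n : ℝ) * ∑ i, (∑ k, c k * b k (x i)) ^ 2
              - ∫ ω, (∑ k, c k * b k (X ω)) ^ 2 ∂P|
            / ∫ ω, (∑ k, c k * b k (X ω)) ^ 2 ∂P}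
      = specNorm ((Matrix.of fun j k =>
          (1 / n : ℝ) * ∑ i, (R⁻¹.mulVec (fun l => b l (x i))) j
            * (R⁻¹.mulVec (fun l => b l (x i))) k) - 1) :=
  stmt7_general P X K b hbint G hG R hR hRG n x
end
end

section
/- There exists a universal constant C < infinity such that the following holds. Let J <= K be positive integers, let S and S-hat be real J x K matrices with ||S|| <= 1 and with smallest (J-th) singular value sigma of S satisfying sigma > 0, and let A be a real symmetric positive semidefinite K x K matrix with ||A - I_K|| <= 1/2 and sqrt(2) ||S-hat - S|| + (1 + 2^{-1/2})^{-1} ||A - I_K|| <= sigma / 2. Define D = S' (S S')^{-1} S and D-hat = A^{-1} S-hat' ( S-hat A^{-1} S-hat' )^{-1} S-hat A^{-1} (both well defined under these hypotheses). Then || D-hat - D || <= C * ( ||A - I_K|| + sigma^{-1} ( ||S-hat - S|| + ||A - I_K|| ) ). -/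
noncomputable section
open Matrix

/-- Smallest (J-th) singular value of a `J × K` matrix (`J ≤ K`):
`inf { ‖Sᵀ v‖ : v ∈ ℝ^J, ‖v‖ = 1 }`. -/
def minSingVal {J K : ℕ} (S : Matrix (Fin J) (Fin K) ℝ) : ℝ :=
  sInf {r | ∃ v : Fin J → ℝ, eucNorm v = 1 ∧ r = eucNorm (Sᵀ.mulVec v)}

open scoped Matrix.Norms.L2Operator

/-!
Write `B = Asq⁻¹ = A^{-1/2}` and `P R = Rᵀ (R Rᵀ)⁻¹ R` for the orthogonal projection onto the row
space of `R`. Then `D = P S` and `D̂ = B P (Ŝ B) B`. Since `‖A - 1‖ ≤ 1/2`, the matrix `B` is within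
`2 ‖A - 1‖` of the identity, so `T = Ŝ B` is within `2 (‖Ŝ - S‖ + ‖A - 1‖)` of `S` and its smallest
singular value is still at least `σ / 3`. Finally, if the smallest singular values of `S` and `T`
are at least `c` and `d`, then `‖P T - P S‖ ≤ (d⁻¹ + c⁻¹) ‖T - S‖`, because both
`P T (1 - P S)` and `(1 - P T) P S` factor through `T - S`.
-/

section

variable {m n : ℕ}

lemma eucNorm_eq_norm (v : Fin n → ℝ) : eucNorm v = ‖WithLp.toLp 2 v‖ := by
  simp [eucNorm, EuclideanSpace.norm_eq, sq_abs]

lemma eucNorm_nonneg (v : Fin n → ℝ) : 0 ≤ eucNorm v := Real.sqrt_nonneg _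

lemma eucNorm_pos {v : Fin n → ℝ} (hv : v ≠ 0) : 0 < eucNorm v := by
  simpa [eucNorm_eq_norm] using hv

lemma eucNorm_smul (c : ℝ) (v : Fin n → ℝ) : eucNorm (c • v) = |c| * eucNorm v := by
  simp [eucNorm_eq_norm, WithLp.toLp_smul, norm_smul]

lemma eucNorm_sq (v : Fin n → ℝ) : eucNorm v ^ 2 = v ⬝ᵥ v := by
  rw [eucNorm, Real.sq_sqrt (by positivity)]
  simp [dotProduct, sq]

lemma dotProduct_le_eucNorm_mul (x y : Fin n → ℝ) : x ⬝ᵥ y ≤ eucNorm x * eucNorm y := by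
  have := real_inner_le_norm (WithLp.toLp 2 y : EuclideanSpace ℝ (Fin n)) (WithLp.toLp 2 x)
  rwa [EuclideanSpace.inner_toLp_toLp, star_trivial, ← eucNorm_eq_norm, ← eucNorm_eq_norm,
    mul_comm] at this

lemma eucNorm_mulVec_le (M : Matrix (Fin m) (Fin n) ℝ) (v : Fin n → ℝ) :
    eucNorm (M *ᵥ v) ≤ ‖M‖ * eucNorm v := by
  simpa [eucNorm_eq_norm] using M.l2_opNorm_mulVec (WithLp.toLp 2 v)

lemma eucNorm_mulVec_sub_le (M N : Matrix (Fin m) (Fin n) ℝ) (v : Fin n → ℝ) :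
    eucNorm (M *ᵥ v) - eucNorm (N *ᵥ v) ≤ ‖M - N‖ * eucNorm v := by
  refine le_trans ?_ (eucNorm_mulVec_le (M - N) v)
  simpa only [eucNorm_eq_norm, Matrix.sub_mulVec, WithLp.toLp_sub] using norm_sub_norm_le _ _

lemma norm_le_of_eucNorm_mulVec_le {M : Matrix (Fin m) (Fin n) ℝ} {c : ℝ} (hc : 0 ≤ c)
    (h : ∀ v, eucNorm (M *ᵥ v) ≤ c * eucNorm v) : ‖M‖ ≤ c := by
  rw [Matrix.l2_opNorm_def]
  refine ContinuousLinearMap.opNorm_le_bound _ hc fun x => ?_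
  simpa [eucNorm_eq_norm, Matrix.toLpLin_apply] using h x.ofLp

lemma l2_opNorm_transpose (M : Matrix (Fin m) (Fin n) ℝ) : ‖Mᵀ‖ = ‖M‖ := by
  rw [← Matrix.conjTranspose_eq_transpose_of_trivial, Matrix.l2_opNorm_conjTranspose]

lemma specNorm_eq_norm (M : Matrix (Fin m) (Fin n) ℝ) : specNorm M = ‖M‖ := by
  rw [Matrix.l2_opNorm_def, ← ContinuousLinearMap.sSup_unitClosedBall_eq_norm, specNorm]
  congr 1
  ext r
  simp only [Set.mem_ofPred_eq, Set.mem_image, Metric.mem_closedBall, dist_zero_right]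
  constructor
  · rintro ⟨v, hv, rfl⟩
    exact ⟨WithLp.toLp 2 v, by rwa [← eucNorm_eq_norm],
      by simp [eucNorm_eq_norm, Matrix.toLpLin_apply]⟩
  · rintro ⟨x, hx, rfl⟩
    exact ⟨x.ofLp, by rwa [eucNorm_eq_norm], by simp [eucNorm_eq_norm, Matrix.toLpLin_apply]⟩

lemma minSingVal_mul_le (S : Matrix (Fin m) (Fin n) ℝ) (v : Fin m → ℝ) :
    minSingVal S * eucNorm v ≤ eucNorm (Sᵀ *ᵥ v) := by
  rcases eq_or_ne v 0 with rfl | hv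
  · simp [eucNorm_eq_norm]
  have hpos := eucNorm_pos hv
  have hbdd : BddBelow {r | ∃ w : Fin m → ℝ, eucNorm w = 1 ∧ r = eucNorm (Sᵀ *ᵥ w)} :=
    ⟨0, by rintro r ⟨w, -, rfl⟩; exact eucNorm_nonneg _⟩
  have hunit : eucNorm ((eucNorm v)⁻¹ • v) = 1 := by
    rw [eucNorm_smul, abs_inv, abs_of_pos hpos, inv_mul_cancel₀ hpos.ne']
  have := csInf_le hbdd ⟨_, hunit, rfl⟩
  rwa [Matrix.mulVec_smul, eucNorm_smul, abs_inv, abs_of_pos hpos, inv_mul_eq_div,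
    le_div_iff₀ hpos] at this

lemma lowerBound_of_quadratic {M : Matrix (Fin n) (Fin n) ℝ} {c : ℝ}
    (h : ∀ v, c * eucNorm v ^ 2 ≤ v ⬝ᵥ (M *ᵥ v)) (v : Fin n → ℝ) :
    c * eucNorm v ≤ eucNorm (M *ᵥ v) := by
  rcases (eucNorm_nonneg v).eq_or_lt with hv | hv
  · rw [← hv, mul_zero]; exact eucNorm_nonneg _
  refine le_of_mul_le_mul_right ?_ hv
  calc c * eucNorm v * eucNorm v = c * eucNorm v ^ 2 := by ring
    _ ≤ v ⬝ᵥ (M *ᵥ v) := h v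
    _ ≤ eucNorm (M *ᵥ v) * eucNorm v := by
      rw [mul_comm]; exact dotProduct_le_eucNorm_mul _ _

lemma lowerBound_of_norm_sub_one (M : Matrix (Fin n) (Fin n) ℝ) (v : Fin n → ℝ) :
    (1 - ‖M - 1‖) * eucNorm v ≤ eucNorm (M *ᵥ v) := by
  have := eucNorm_mulVec_sub_le 1 M v
  rw [Matrix.one_mulVec, norm_sub_rev] at this
  linarith

lemma lowerBound_of_norm_sub {S T : Matrix (Fin m) (Fin n) ℝ} {c : ℝ}
    (hS : ∀ v, c * eucNorm v ≤ eucNorm (Sᵀ *ᵥ v)) (v : Fin m → ℝ) :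
    (c - ‖T - S‖) * eucNorm v ≤ eucNorm (Tᵀ *ᵥ v) := by
  have := eucNorm_mulVec_sub_le Sᵀ Tᵀ v
  rw [← Matrix.transpose_sub, l2_opNorm_transpose, norm_sub_rev] at this
  linarith [hS v]

lemma isUnit_det_of_lowerBound {M : Matrix (Fin n) (Fin n) ℝ} {c : ℝ} (hc : 0 < c)
    (h : ∀ v, c * eucNorm v ≤ eucNorm (M *ᵥ v)) : IsUnit M.det := by
  rw [isUnit_iff_ne_zero]
  intro hdet
  obtain ⟨v, hv, hMv⟩ := Matrix.exists_mulVec_eq_zero_iff.mpr hdet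
  have := h v
  rw [hMv, show eucNorm (0 : Fin n → ℝ) = 0 by simp [eucNorm]] at this
  nlinarith [eucNorm_pos hv]

lemma norm_inv_le_of_lowerBound {M : Matrix (Fin n) (Fin n) ℝ} {c : ℝ} (hc : 0 < c)
    (h : ∀ v, c * eucNorm v ≤ eucNorm (M *ᵥ v)) : ‖M⁻¹‖ ≤ c⁻¹ := by
  refine norm_le_of_eucNorm_mulVec_le (inv_nonneg.mpr hc.le) fun v => ?_
  have := h (M⁻¹ *ᵥ v)
  rw [Matrix.mulVec_mulVec, Matrix.mul_nonsing_inv M (isUnit_det_of_lowerBound hc h),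
    Matrix.one_mulVec] at this
  rwa [inv_mul_eq_div, le_div_iff₀' hc]

lemma lowerBound_inv_mul {N : Matrix (Fin n) (Fin n) ℝ} {M : Matrix (Fin n) (Fin m) ℝ} {b c : ℝ}
    (hb : 0 < b) (hN : ‖N‖ ≤ b) (hdet : IsUnit N.det)
    (hM : ∀ v, c * eucNorm v ≤ eucNorm (M *ᵥ v)) (v : Fin m → ℝ) :
    c / b * eucNorm v ≤ eucNorm ((N⁻¹ * M) *ᵥ v) := by
  rw [div_mul_eq_mul_div, div_le_iff₀' hb]
  calc c * eucNorm v ≤ eucNorm (M *ᵥ v) := hM v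
    _ = eucNorm (N *ᵥ ((N⁻¹ * M) *ᵥ v)) := by
      rw [Matrix.mulVec_mulVec, ← Matrix.mul_assoc, Matrix.mul_nonsing_inv _ hdet, Matrix.one_mul]
    _ ≤ b * eucNorm ((N⁻¹ * M) *ᵥ v) :=
      (eucNorm_mulVec_le _ _).trans (mul_le_mul_of_nonneg_right hN (eucNorm_nonneg _))

lemma norm_le_one_add_norm_sub_one (M : Matrix (Fin n) (Fin n) ℝ) : ‖M‖ ≤ 1 + ‖M - 1‖ := by
  linarith [norm_le_norm_sub_add M 1,
    IsStarProjection.norm_le (1 : Matrix (Fin n) (Fin n) ℝ) (.one _)]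

lemma isUnit_det_of_norm_sub_one_lt {M : Matrix (Fin n) (Fin n) ℝ} (hM : ‖M - 1‖ < 1) :
    IsUnit M.det :=
  isUnit_det_of_lowerBound (sub_pos.mpr hM) (lowerBound_of_norm_sub_one M)

lemma norm_inv_le_of_norm_sub_one_lt {M : Matrix (Fin n) (Fin n) ℝ} (hM : ‖M - 1‖ < 1) :
    ‖M⁻¹‖ ≤ (1 - ‖M - 1‖)⁻¹ :=
  norm_inv_le_of_lowerBound (sub_pos.mpr hM) (lowerBound_of_norm_sub_one M)

lemma norm_inv_sub_one_le {M : Matrix (Fin n) (Fin n) ℝ} (hdet : IsUnit M.det) :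
    ‖M⁻¹ - 1‖ ≤ ‖M⁻¹‖ * ‖M - 1‖ := by
  rw [show M⁻¹ - 1 = M⁻¹ * (1 - M) by
    rw [Matrix.mul_sub, Matrix.mul_one, Matrix.nonsing_inv_mul _ hdet], norm_sub_rev M]
  exact Matrix.l2_opNorm_mul _ _

lemma lowerBound_mul_inv_transpose {S T : Matrix (Fin m) (Fin n) ℝ} {N : Matrix (Fin n) (Fin n) ℝ}
    {b c : ℝ} (hN : N.IsHermitian) (hb : 0 < b) (hNb : ‖N‖ ≤ b) (hdet : IsUnit N.det)
    (hS : ∀ v, c * eucNorm v ≤ eucNorm (Sᵀ *ᵥ v)) (v : Fin m → ℝ) :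
    (c - ‖T - S‖) / b * eucNorm v ≤ eucNorm ((T * N⁻¹)ᵀ *ᵥ v) := by
  rw [Matrix.transpose_mul, Matrix.transpose_nonsing_inv,
    ← Matrix.conjTranspose_eq_transpose_of_trivial N, hN.eq]
  exact lowerBound_inv_mul hb hNb hdet (lowerBound_of_norm_sub hS) v

lemma norm_sub_one_le_norm_mul_self_sub_one {B : Matrix (Fin n) (Fin n) ℝ} (hB : B.PosSemidef) :
    ‖B - 1‖ ≤ ‖B * B - 1‖ := by
  -- `B + 1 ≥ 1`, so `‖(B + 1)⁻¹‖ ≤ 1`, and `B - 1 = (B * B - 1) (B + 1)⁻¹`.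
  have hlow : ∀ v, 1 * eucNorm v ≤ eucNorm ((B + 1) *ᵥ v) := lowerBound_of_quadratic fun v => by
    rw [Matrix.add_mulVec, Matrix.one_mulVec, dotProduct_add, ← eucNorm_sq, one_mul]
    have := hB.dotProduct_mulVec_nonneg v
    rw [star_trivial] at this
    linarith
  have hdet := isUnit_det_of_lowerBound one_pos hlow
  have hfac : B - 1 = (B * B - 1) * (B + 1)⁻¹ := by
    rw [show B * B - 1 = (B - 1) * (B + 1) by noncomm_ring, Matrix.mul_assoc,
      Matrix.mul_nonsing_inv _ hdet, Matrix.mul_one]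
  calc ‖B - 1‖ ≤ ‖B * B - 1‖ * ‖(B + 1)⁻¹‖ := hfac ▸ Matrix.l2_opNorm_mul _ _
    _ ≤ ‖B * B - 1‖ * 1 := by
      gcongr
      simpa using norm_inv_le_of_lowerBound one_pos hlow
    _ = ‖B * B - 1‖ := mul_one _

lemma norm_mul_sub_le (T S : Matrix (Fin m) (Fin n) ℝ) (B : Matrix (Fin n) (Fin n) ℝ) :
    ‖T * B - S‖ ≤ ‖T - S‖ * ‖B‖ + ‖S‖ * ‖B - 1‖ := by
  rw [show T * B - S = (T - S) * B + S * (B - 1) by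
    rw [Matrix.sub_mul, Matrix.mul_sub, Matrix.mul_one, sub_add_sub_cancel]]
  exact (norm_add_le _ _).trans (add_le_add (Matrix.l2_opNorm_mul _ _) (Matrix.l2_opNorm_mul _ _))

lemma norm_mul_mul_sub_le {B P Q : Matrix (Fin n) (Fin n) ℝ} (hP : ‖P‖ ≤ 1) :
    ‖B * P * B - Q‖ ≤ ‖B - 1‖ * (‖B‖ + 1) + ‖P - Q‖ := by
  calc ‖B * P * B - Q‖ = ‖(B - 1) * (P * B) + P * (B - 1) + (P - Q)‖ := by noncomm_ring
    _ ≤ ‖B - 1‖ * (1 * ‖B‖) + 1 * ‖B - 1‖ + ‖P - Q‖ := by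
      refine (norm_add₃_le).trans (add_le_add_three ?_ ?_ le_rfl)
      · exact (Matrix.l2_opNorm_mul _ _).trans (mul_le_mul_of_nonneg_left
          ((Matrix.l2_opNorm_mul _ _).trans (by gcongr)) (norm_nonneg _))
      · exact (Matrix.l2_opNorm_mul _ _).trans (by gcongr)
    _ = ‖B - 1‖ * (‖B‖ + 1) + ‖P - Q‖ := by ring

def rowSpaceProj (R : Matrix (Fin m) (Fin n) ℝ) : Matrix (Fin n) (Fin n) ℝ :=
  Rᵀ * (R * Rᵀ)⁻¹ * R

section RowSpaceProj

variable {R : Matrix (Fin m) (Fin n) ℝ} {c : ℝ}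

lemma transpose_inv_mul_transpose_self : ((R * Rᵀ)⁻¹)ᵀ = (R * Rᵀ)⁻¹ := by
  rw [Matrix.transpose_nonsing_inv, Matrix.transpose_mul, Matrix.transpose_transpose]

lemma mul_transpose_lowerBound (hc : 0 ≤ c) (hR : ∀ v, c * eucNorm v ≤ eucNorm (Rᵀ *ᵥ v))
    (v : Fin m → ℝ) : c ^ 2 * eucNorm v ≤ eucNorm ((R * Rᵀ) *ᵥ v) := by
  refine lowerBound_of_quadratic (fun w => ?_) v
  have hquad : w ⬝ᵥ ((R * Rᵀ) *ᵥ w) = eucNorm (Rᵀ *ᵥ w) ^ 2 := by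
    rw [eucNorm_sq, ← Matrix.mulVec_mulVec, Matrix.dotProduct_mulVec, Matrix.mulVec_transpose]
  rw [hquad, ← mul_pow]
  gcongr
  · exact mul_nonneg hc (eucNorm_nonneg w)
  · exact hR w

lemma isUnit_det_mul_transpose (hc : 0 < c) (hR : ∀ v, c * eucNorm v ≤ eucNorm (Rᵀ *ᵥ v)) :
    IsUnit (R * Rᵀ).det :=
  isUnit_det_of_lowerBound (pow_pos hc 2) (mul_transpose_lowerBound hc.le hR)

lemma norm_transpose_mul_inv_le (hc : 0 < c) (hR : ∀ v, c * eucNorm v ≤ eucNorm (Rᵀ *ᵥ v)) :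
    ‖Rᵀ * (R * Rᵀ)⁻¹‖ ≤ c⁻¹ := by
  have hG := norm_inv_le_of_lowerBound (pow_pos hc 2) (mul_transpose_lowerBound hc.le hR)
  -- C*-identity: the Gram matrix of `Rᵀ (R Rᵀ)⁻¹` is `(R Rᵀ)⁻¹`.
  have hgram : (Rᵀ * (R * Rᵀ)⁻¹)ᴴ * (Rᵀ * (R * Rᵀ)⁻¹) = (R * Rᵀ)⁻¹ := by
    rw [Matrix.conjTranspose_eq_transpose_of_trivial, Matrix.transpose_mul,
      transpose_inv_mul_transpose_self, Matrix.transpose_transpose, Matrix.mul_assoc,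
      ← Matrix.mul_assoc R, Matrix.mul_nonsing_inv _ (isUnit_det_mul_transpose hc hR),
      Matrix.mul_one]
  rw [mul_self_le_mul_self_iff (norm_nonneg _) (inv_nonneg.mpr hc.le),
    ← Matrix.l2_opNorm_conjTranspose_mul_self, hgram, ← mul_inv, ← sq]
  exact hG

lemma rowSpaceProj_mul_transpose (hdet : IsUnit (R * Rᵀ).det) : rowSpaceProj R * Rᵀ = Rᵀ := by
  simp only [rowSpaceProj, Matrix.mul_assoc]
  rw [Matrix.nonsing_inv_mul _ hdet, Matrix.mul_one]

lemma mul_rowSpaceProj (hdet : IsUnit (R * Rᵀ).det) : R * rowSpaceProj R = R := by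
  simp only [rowSpaceProj, ← Matrix.mul_assoc]
  rw [Matrix.mul_nonsing_inv _ hdet, Matrix.one_mul]

lemma isStarProjection_rowSpaceProj (hdet : IsUnit (R * Rᵀ).det) :
    IsStarProjection (rowSpaceProj R) where
  isIdempotentElem := by
    calc rowSpaceProj R * rowSpaceProj R = Rᵀ * (R * Rᵀ)⁻¹ * (R * rowSpaceProj R) := by
          simp only [rowSpaceProj, Matrix.mul_assoc]
      _ = rowSpaceProj R := by rw [mul_rowSpaceProj hdet, rowSpaceProj]
  isSelfAdjoint := by
    rw [IsSelfAdjoint, Matrix.star_eq_conjTranspose, Matrix.conjTranspose_eq_transpose_of_trivial,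
      rowSpaceProj, Matrix.transpose_mul, Matrix.transpose_mul, Matrix.transpose_transpose,
      transpose_inv_mul_transpose_self, Matrix.mul_assoc]

lemma mul_rowSpaceProj_mul {C : Matrix (Fin n) (Fin n) ℝ} (hC : C.IsHermitian)
    (R : Matrix (Fin m) (Fin n) ℝ) :
    C * rowSpaceProj (R * C) * C = C * C * Rᵀ * (R * (C * C) * Rᵀ)⁻¹ * R * (C * C) := by
  have hCT : Cᵀ = C := by rw [← Matrix.conjTranspose_eq_transpose_of_trivial, hC.eq]
  simp only [rowSpaceProj, Matrix.transpose_mul, hCT, Matrix.mul_assoc]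

end RowSpaceProj

lemma norm_rowSpaceProj_sub_le {S T : Matrix (Fin m) (Fin n) ℝ} {c d : ℝ} (hc : 0 < c)
    (hd : 0 < d) (hS : ∀ v, c * eucNorm v ≤ eucNorm (Sᵀ *ᵥ v))
    (hT : ∀ v, d * eucNorm v ≤ eucNorm (Tᵀ *ᵥ v)) :
    ‖rowSpaceProj T - rowSpaceProj S‖ ≤ (d⁻¹ + c⁻¹) * ‖T - S‖ := by
  set P := rowSpaceProj T
  set Q := rowSpaceProj S
  have hSdet := isUnit_det_mul_transpose hc hS
  have hTdet := isUnit_det_mul_transpose hd hT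
  have hP := isStarProjection_rowSpaceProj hTdet
  have hQ := isStarProjection_rowSpaceProj hSdet
  have hPQ : P * (1 - Q) = (Tᵀ * (T * Tᵀ)⁻¹) * ((T - S) * (1 - Q)) := by
    rw [Matrix.sub_mul T S, Matrix.mul_sub S, Matrix.mul_one, mul_rowSpaceProj hSdet, sub_self,
      sub_zero, ← Matrix.mul_assoc]
    rfl
  have hQP : (1 - P) * Q = ((1 - P) * (Sᵀ - Tᵀ)) * ((S * Sᵀ)⁻¹ * S) := by
    rw [Matrix.mul_sub (1 - P), Matrix.sub_mul 1 P Tᵀ, rowSpaceProj_mul_transpose hTdet,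
      Matrix.one_mul, sub_self, sub_zero, Matrix.mul_assoc]
    simp only [Q, rowSpaceProj, Matrix.mul_assoc]
  have hinvS : ‖(S * Sᵀ)⁻¹ * S‖ ≤ c⁻¹ := by
    rw [← l2_opNorm_transpose, Matrix.transpose_mul, transpose_inv_mul_transpose_self]
    exact norm_transpose_mul_inv_le hc hS
  have hST : ‖Sᵀ - Tᵀ‖ = ‖T - S‖ := by
    rw [← Matrix.transpose_sub, l2_opNorm_transpose, norm_sub_rev]
  calc ‖P - Q‖ = ‖P * (1 - Q) - (1 - P) * Q‖ := by noncomm_ring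
    _ ≤ d⁻¹ * (‖T - S‖ * 1) + 1 * ‖T - S‖ * c⁻¹ := by
      refine (norm_sub_le _ _).trans (add_le_add ?_ ?_)
      · rw [hPQ]
        refine (Matrix.l2_opNorm_mul _ _).trans (mul_le_mul (norm_transpose_mul_inv_le hd hT)
          ((Matrix.l2_opNorm_mul _ _).trans ?_) (norm_nonneg _) (by positivity))
        exact mul_le_mul_of_nonneg_left hQ.one_sub.norm_le (norm_nonneg _)
      · rw [hQP]
        refine (Matrix.l2_opNorm_mul _ _).trans (mul_le_mul ((Matrix.l2_opNorm_mul _ _).trans ?_)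
          hinvS (norm_nonneg _) (by positivity))
        rw [hST]
        exact mul_le_mul_of_nonneg_right hP.one_sub.norm_le (norm_nonneg _)
    _ = (d⁻¹ + c⁻¹) * ‖T - S‖ := by ring

lemma norm_mul_rowSpaceProj_mul_sub_le {S T : Matrix (Fin m) (Fin n) ℝ}
    (B : Matrix (Fin n) (Fin n) ℝ) {c d : ℝ} (hc : 0 < c) (hd : 0 < d)
    (hS : ∀ v, c * eucNorm v ≤ eucNorm (Sᵀ *ᵥ v)) (hT : ∀ v, d * eucNorm v ≤ eucNorm (Tᵀ *ᵥ v)) :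
    ‖B * rowSpaceProj T * B - rowSpaceProj S‖ ≤ ‖B - 1‖ * (‖B‖ + 1) + (d⁻¹ + c⁻¹) * ‖T - S‖ :=
  (norm_mul_mul_sub_le
    (isStarProjection_rowSpaceProj (isUnit_det_mul_transpose hd hT)).norm_le).trans
    (add_le_add le_rfl (norm_rowSpaceProj_sub_le hc hd hS hT))

end

/-- there is a universal constant `C` bounding the spectral norm
of `D̂ - D`, where `D = S'(SS')⁻¹S` and `D̂ = A⁻¹Ŝ'(ŜA⁻¹Ŝ')⁻¹ŜA⁻¹`.  Here `Asq`
is the positive-semidefinite symmetric square root of `A` (so `A^{-1/2} = Asq⁻¹`). -/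
theorem stmt12 :
    ∃ C : ℝ, 0 ≤ C ∧
      ∀ (J K : ℕ), 0 < J → J ≤ K →
        ∀ (S Shat : Matrix (Fin J) (Fin K) ℝ) (σ : ℝ)
          (A Asq : Matrix (Fin K) (Fin K) ℝ),
          specNorm S ≤ 1 → σ = minSingVal S → 0 < σ →
          A.PosSemidef → specNorm (A - 1) ≤ 1 / 2 →
          Asq.PosSemidef → Asq * Asq = A →
          Real.sqrt 2 * specNorm (Shat - S)
              + (1 + (Real.sqrt 2)⁻¹)⁻¹ * specNorm (A - 1) ≤ σ / 2 →
          specNorm (A⁻¹ * Shatᵀ * (Shat * A⁻¹ * Shatᵀ)⁻¹ * Shat * A⁻¹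
              - Sᵀ * (S * Sᵀ)⁻¹ * S)
            ≤ C * (specNorm (A - 1)
                + σ⁻¹ * (specNorm (Shat - S) + specNorm (A - 1))) := by
  refine ⟨8, by norm_num, ?_⟩
  intro J K _ _ S Shat σ A Asq hS hσ hσpos _ hA hAsq hsq hsmall
  simp only [specNorm_eq_norm] at hS hA hsmall ⊢
  subst hsq
  set δ := ‖Asq * Asq - 1‖
  set ε := ‖Shat - S‖
  have hε : ε ≤ σ / 2 := by
    have : 0 ≤ (1 + (√2)⁻¹)⁻¹ * δ := by positivity
    nlinarith [Real.one_le_sqrt.mpr one_le_two, norm_nonneg (Shat - S)]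
  have hAsq1 : ‖Asq - 1‖ ≤ δ := norm_sub_one_le_norm_mul_self_sub_one hAsq
  have hlt : ‖Asq - 1‖ < 1 := by linarith
  have hdet := isUnit_det_of_norm_sub_one_lt hlt
  have hinv : ‖Asq⁻¹‖ ≤ 2 := (norm_inv_le_of_norm_sub_one_lt hlt).trans
    (inv_le_of_inv_le₀ (by norm_num) (by linarith))
  have hinv1 : ‖Asq⁻¹ - 1‖ ≤ 2 * δ := (norm_inv_sub_one_le hdet).trans (by gcongr)
  have hσS (v : Fin J → ℝ) : σ * eucNorm v ≤ eucNorm (Sᵀ *ᵥ v) := hσ ▸ minSingVal_mul_le S v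
  have hT (v : Fin J → ℝ) : σ / 3 * eucNorm v ≤ eucNorm ((Shat * Asq⁻¹)ᵀ *ᵥ v) :=
    (mul_le_mul_of_nonneg_right (by linarith) (eucNorm_nonneg v)).trans
      (lowerBound_mul_inv_transpose (b := 3 / 2) hAsq.isHermitian (by norm_num)
        ((norm_le_one_add_norm_sub_one Asq).trans (by linarith)) hdet hσS v)
  have hTS : ‖Shat * Asq⁻¹ - S‖ ≤ 2 * (ε + δ) := (norm_mul_sub_le Shat S Asq⁻¹).trans (by
    linarith [mul_le_mul_of_nonneg_left hinv (norm_nonneg (Shat - S)),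
      mul_le_mul hS hinv1 (norm_nonneg _) zero_le_one])
  rw [Matrix.mul_inv_rev, ← mul_rowSpaceProj_mul hAsq.isHermitian.inv]
  calc _ ≤ ‖Asq⁻¹ - 1‖ * (‖Asq⁻¹‖ + 1) + ((σ / 3)⁻¹ + σ⁻¹) * ‖Shat * Asq⁻¹ - S‖ :=
        norm_mul_rowSpaceProj_mul_sub_le _ hσpos (by positivity) hσS hT
    _ ≤ 2 * δ * (2 + 1) + ((σ / 3)⁻¹ + σ⁻¹) * (2 * (ε + δ)) := by gcongr
    _ ≤ 8 * (δ + σ⁻¹ * (ε + δ)) := by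
      rw [inv_div, div_eq_mul_inv]
      nlinarith [inv_nonneg.mpr hσpos.le, norm_nonneg (Asq * Asq - 1), norm_nonneg (Shat - S)]
end
end
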